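/- Let α > 0, δ ∈ (0, α), set ω = (α − δ)/2, and let g : (0,∞) → ℝ satisfy: g and g' are absolutely continuous and summable on (0,∞); g ≥ 0 and g' ≤ 0 on (0,∞); and (α − δ) g'(s) − g''(s) ≤ 0 for a.e. s > 0. Let E be a real Hilbert space and let η : (0,∞) → E be locally absolutely continuous with η(s) → 0 as s → 0⁺, ∫₀^∞ −g'(s) ‖η(s)‖² ds < ∞ and ∫₀^∞ −g'(s) ‖η'(s)‖² ds < ∞. Then ∫₀^∞ −g'(s) ⟨−η'(s) − ω η(s), η(s)⟩ ds ≤ 0; that is, ∫₀^∞ −g'(s) ⟨−η'(s), η(s)⟩ ds ≤ ω ∫₀^∞ −g'(s) ‖η(s)‖² ds. -/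

import Mathlib

/-!
Write `φ = ‖η‖²`, so that the integrand is `½ g' φ' + ω g' φ`. On `[a, b] ⊂ (0, ∞)`, integration
by parts for absolutely continuous functions gives
`∫_a^b = ½ [g' φ]_a^b + ½ ∫_a^b ((α - δ) g' - g'') φ ≤ -½ g'(a) φ(a)`,
so it suffices that `-g'(a) ‖η(a)‖² → 0` as `a → 0⁺`. The condition `g'' ≥ (α - δ) g'` gives
`-g'(s) ≥ -g'(a) - (α - δ) ∫_0^a -g'` for `0 < s ≤ a`, while `η(0⁺) = 0` and Cauchy–Schwarz give
`‖η(a)‖² ≤ a ∫_0^a ‖η'‖²`. Together,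
`-g'(a) ‖η(a)‖² ≤ (α - δ) (∫_0^a -g') ‖η(a)‖² + a ∫_0^a -g' ‖η'‖²`, and both terms vanish at `0⁺`.
-/

open MeasureTheory Filter Topology Set

namespace AbsolutelyContinuousOnInterval

variable {a b : ℝ}

theorem of_dist_le_mul {X Y : Type*} [PseudoMetricSpace X] [PseudoMetricSpace Y] {f : ℝ → X}
    {F : ℝ → Y} (K : ℝ) (hF : AbsolutelyContinuousOnInterval F a b)
    (hfF : ∀ x ∈ uIcc a b, ∀ y ∈ uIcc a b, dist (f x) (f y) ≤ K * dist (F x) (F y)) :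
    AbsolutelyContinuousOnInterval f a b := by
  unfold AbsolutelyContinuousOnInterval at hF ⊢
  refine squeeze_zero' (Eventually.of_forall fun _ => Finset.sum_nonneg fun _ _ => dist_nonneg)
    ?_ (by simpa using hF.const_mul K)
  rw [eventually_inf_principal]
  filter_upwards with E hE
  rw [Finset.mul_sum]
  exact Finset.sum_le_sum fun i hi => hfF _ (hE.1 i hi).1 _ (hE.1 i hi).2

theorem of_sub_eq_intervalIntegral {E : Type*} [NormedAddCommGroup E] [NormedSpace ℝ E]
    {f f' : ℝ → E} (hf' : IntervalIntegrable f' volume a b)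
    (hf : ∀ x ∈ uIcc a b, f x - f a = ∫ t in a..x, f' t) :
    AbsolutelyContinuousOnInterval f a b := by
  refine of_dist_le_mul 1 (hf'.norm.absolutelyContinuousOnInterval_intervalIntegral
    left_mem_uIcc) fun x hx y hy => ?_
  have hf'x := hf'.mono_set (uIcc_subset_uIcc_left hx)
  have hf'y := hf'.mono_set (uIcc_subset_uIcc_left hy)
  have hsub : f x - f y = ∫ t in y..x, f' t := by
    rw [← intervalIntegral.integral_interval_sub_left hf'x hf'y, ← hf x hx, ← hf y hy,
      sub_sub_sub_cancel_right]
  rw [one_mul, dist_eq_norm, hsub, Real.dist_eq,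
    intervalIntegral.integral_interval_sub_left hf'x.norm hf'y.norm]
  exact intervalIntegral.norm_integral_le_abs_integral_norm

theorem norm_sq {E : Type*} [NormedAddCommGroup E] {f : ℝ → E}
    (hf : AbsolutelyContinuousOnInterval f a b) :
    AbsolutelyContinuousOnInterval (fun x => ‖f x‖ ^ 2) a b := by
  obtain ⟨C, hC⟩ := hf.exists_bound
  refine of_dist_le_mul (2 * C) hf fun x hx y hy => ?_
  have hsum : ‖f x‖ + ‖f y‖ ≤ 2 * C := by linarith [hC x hx, hC y hy]
  calc dist (‖f x‖ ^ 2) (‖f y‖ ^ 2) = (‖f x‖ + ‖f y‖) * |‖f x‖ - ‖f y‖| := by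
        rw [Real.dist_eq, sq_sub_sq, abs_mul, abs_of_nonneg (by positivity)]
    _ ≤ 2 * C * dist (f x) (f y) := by
        rw [dist_eq_norm]
        exact mul_le_mul hsum (abs_norm_sub_norm_le _ _) (abs_nonneg _)
          ((by positivity : (0 : ℝ) ≤ ‖f x‖ + ‖f y‖).trans hsum)

end AbsolutelyContinuousOnInterval

theorem continuousOn_Ioi_of_absolutelyContinuousOnInterval {E : Type*} [SeminormedAddCommGroup E]
    {f : ℝ → E} (hf : ∀ a b, 0 < a → a ≤ b → AbsolutelyContinuousOnInterval f a b) :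
    ContinuousOn f (Ioi 0) := by
  intro x (hx : 0 < x)
  have hle : x / 2 ≤ 2 * x := by linarith
  have hnhds : uIcc (x / 2) (2 * x) ∈ 𝓝 x := by
    rw [uIcc_of_le hle]
    exact Icc_mem_nhds (by linarith) (by linarith)
  exact ((hf _ _ (by positivity) hle).continuousOn.continuousAt hnhds).continuousWithinAt

theorem tendsto_intervalIntegral_nhdsGT {E : Type*} [NormedAddCommGroup E] [NormedSpace ℝ E]
    {f : ℝ → E} {a b : ℝ} (hab : a < b) (hf : IntegrableOn f (Ioc a b)) :
    Tendsto (fun x => ∫ t in a..x, f t) (𝓝[>] a) (𝓝 0) := by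
  have hcont := intervalIntegral.continuousOn_primitive_interval (μ := volume) (a := a) (b := b)
    (f := f) (by rwa [uIcc_of_le hab.le, integrableOn_Icc_iff_integrableOn_Ioc])
  have := (hcont a left_mem_uIcc).mono_of_mem_nhdsWithin (by
    rw [uIcc_of_le hab.le]; exact Icc_mem_nhdsGT hab)
  simpa using this.tendsto

theorem integral_Ioi_le_of_intervalIntegral_le {f B : ℝ → ℝ} {a₀ L : ℝ}
    (hf : IntegrableOn f (Ioi a₀)) (hfB : ∀ a b, a₀ < a → a ≤ b → ∫ x in a..b, f x ≤ B a)
    (hB : Tendsto B (𝓝[>] a₀) (𝓝 L)) :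
    ∫ x in Ioi a₀, f x ≤ L := by
  have hIoi : ∀ a, a₀ < a → ∫ x in Ioi a, f x ≤ B a := fun a ha =>
    le_of_tendsto (intervalIntegral_tendsto_integral_Ioi a
      (hf.mono_set (Ioi_subset_Ioi ha.le)) tendsto_id)
      (eventually_atTop.2 ⟨a, fun b hb => hfB a b ha hb⟩)
  have hlim : Tendsto (fun a => ∫ x in Ioi a, f x) (𝓝[>] a₀) (𝓝 (∫ x in Ioi a₀, f x)) := by
    have := tendsto_const_nhds (x := ∫ x in Ioi a₀, f x) |>.sub
      (tendsto_intervalIntegral_nhdsGT (lt_add_one a₀) (hf.mono_set Ioc_subset_Ioi_self))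
    rw [sub_zero] at this
    refine this.congr' ?_
    filter_upwards [self_mem_nhdsWithin] with a (ha : a₀ < a)
    rw [← intervalIntegral.integral_Ioi_sub_Ioi hf ha.le, sub_sub_cancel]
  exact le_of_tendsto_of_tendsto hlim hB (eventually_nhdsWithin_of_forall hIoi)

theorem sq_integral_le_measureReal_mul_integral_sq {α : Type*} [MeasurableSpace α]
    {μ : Measure α} [IsFiniteMeasure μ] {f : α → ℝ} (hf : MemLp f 2 μ) :
    (∫ x, f x ∂μ) ^ 2 ≤ μ.real univ * ∫ x, f x ^ 2 ∂μ := by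
  have hf1 : Integrable f μ := hf.integrable one_le_two
  have hf2 : Integrable (fun x => f x ^ 2) μ := hf.integrable_sq
  have hquad (t : ℝ) :
      0 ≤ (∫ x, f x ^ 2 ∂μ) * (t * t) + (-2 * ∫ x, f x ∂μ) * t + μ.real univ := by
    have hexp : ∀ x, (t * f x - 1) ^ 2 = t * t * f x ^ 2 + -2 * t * f x + 1 := fun x => by ring
    calc 0 ≤ ∫ x, (t * f x - 1) ^ 2 ∂μ := integral_nonneg fun _ => sq_nonneg _
      _ = _ := by
        simp_rw [hexp]
        rw [integral_add (f := fun x => t * t * f x ^ 2 + -2 * t * f x)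
          ((hf2.const_mul _).add (hf1.const_mul _)) (integrable_const _),
          integral_add (hf2.const_mul _) (hf1.const_mul _), integral_const_mul,
          integral_const_mul, integral_const, smul_eq_mul, mul_one]
        ring
  have := discrim_le_zero hquad
  rw [discrim] at this
  nlinarith

section Normed

variable {E : Type*} [NormedAddCommGroup E] [NormedSpace ℝ E] {w w' : ℝ → ℝ} {η η' : ℝ → E}
  {a c : ℝ}

theorem norm_sq_le_mul_integral_norm_sq (ha : 0 < a)
    (hη : ∀ s ∈ Ioc 0 a, η a - η s = ∫ t in s..a, η' t) (hη0 : Tendsto η (𝓝[>] 0) (𝓝 0))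
    (hη' : MemLp η' 2 (volume.restrict (Ioc 0 a))) :
    ‖η a‖ ^ 2 ≤ a * ∫ t in 0..a, ‖η' t‖ ^ 2 := by
  have hint : IntervalIntegrable η' volume 0 a :=
    (intervalIntegrable_iff_integrableOn_Ioc_of_le ha.le).2 (hη'.integrable one_le_two)
  have hle : ‖η a‖ ≤ ∫ t in 0..a, ‖η' t‖ := by
    have hlim : Tendsto (fun s => ‖η a - η s‖) (𝓝[>] 0) (𝓝 ‖η a‖) := by
      simpa using (tendsto_const_nhds.sub hη0).norm
    refine le_of_tendsto hlim ?_
    filter_upwards [Ioo_mem_nhdsGT ha] with s hs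
    rw [hη s ⟨hs.1, hs.2.le⟩]
    calc ‖∫ t in s..a, η' t‖ ≤ ∫ t in s..a, ‖η' t‖ :=
          intervalIntegral.norm_integral_le_integral_norm hs.2.le
      _ ≤ ∫ t in 0..a, ‖η' t‖ := intervalIntegral.integral_mono_interval hs.1.le hs.2.le le_rfl
          (Eventually.of_forall fun _ => norm_nonneg _) hint.norm
  have hcs := sq_integral_le_measureReal_mul_integral_sq hη'.norm
  rw [measureReal_restrict_apply_univ, Real.volume_real_Ioc_of_le ha.le, sub_zero] at hcs
  rw [intervalIntegral.integral_of_le ha.le] at hle ⊢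
  exact (pow_le_pow_left₀ (norm_nonneg _) hle 2).trans hcs

theorem neg_le_neg_add_mul_integral {s : ℝ} (hs : s ∈ Ioc 0 a) (hc : 0 ≤ c)
    (hw0 : ∀ t ∈ Ioc 0 a, w t ≤ 0) (hw : IntervalIntegrable w volume 0 a)
    (hw' : w a - w s = ∫ t in s..a, w' t) (hw'i : IntervalIntegrable w' volume s a)
    (hcw : ∀ᵐ t, t ∈ Ioc 0 a → c * w t - w' t ≤ 0) :
    -w a ≤ -w s + c * ∫ t in 0..a, -w t := by
  have hws : IntervalIntegrable w volume s a := hw.mono_set (uIcc_subset_uIcc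
    (by rw [uIcc_of_le (hs.1.le.trans hs.2)]; exact ⟨hs.1.le, hs.2⟩) right_mem_uIcc)
  have hgrowth : c * ∫ t in s..a, w t ≤ ∫ t in s..a, w' t := by
    rw [← intervalIntegral.integral_const_mul]
    refine intervalIntegral.integral_mono_ae_restrict hs.2 (hws.const_mul c) hw'i ?_
    filter_upwards [ae_restrict_mem measurableSet_Icc, ae_restrict_of_ae hcw] with t ht hct
    linarith [hct ⟨hs.1.trans_le ht.1, ht.2⟩]
  have hmono : ∫ t in s..a, -w t ≤ ∫ t in 0..a, -w t :=
    intervalIntegral.integral_mono_interval hs.1.le hs.2 le_rfl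
      ((ae_restrict_mem measurableSet_Ioc).mono fun t ht => neg_nonneg.2 (hw0 t ht)) hw.neg
  rw [intervalIntegral.integral_neg] at hmono
  nlinarith [mul_le_mul_of_nonneg_left hmono hc]

theorem neg_mul_norm_sq_le_mul_integral_add (ha : 0 < a) (hc : 0 ≤ c)
    (hw0 : ∀ s ∈ Ioc 0 a, w s ≤ 0) (hw : IntegrableOn w (Ioc 0 a))
    (hw' : ∀ s ∈ Ioc 0 a, w a - w s = ∫ t in s..a, w' t)
    (hw'i : ∀ s ∈ Ioc 0 a, IntervalIntegrable w' volume s a)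
    (hcw : ∀ᵐ t, t ∈ Ioc 0 a → c * w t - w' t ≤ 0)
    (hη : ∀ s ∈ Ioc 0 a, η a - η s = ∫ t in s..a, η' t) (hη0 : Tendsto η (𝓝[>] 0) (𝓝 0))
    (hη'm : AEStronglyMeasurable η' (volume.restrict (Ioc 0 a)))
    (hE : IntegrableOn (fun t => -w t * ‖η' t‖ ^ 2) (Ioc 0 a)) :
    -w a * ‖η a‖ ^ 2 ≤
      c * (∫ t in 0..a, -w t) * ‖η a‖ ^ 2 + a * ∫ t in 0..a, -w t * ‖η' t‖ ^ 2 := by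
  have hwi : IntervalIntegrable w volume 0 a :=
    (intervalIntegrable_iff_integrableOn_Ioc_of_le ha.le).2 hw
  have hEnn : 0 ≤ ∫ t in 0..a, -w t * ‖η' t‖ ^ 2 := by
    rw [intervalIntegral.integral_of_le ha.le]
    exact setIntegral_nonneg measurableSet_Ioc fun t ht =>
      mul_nonneg (neg_nonneg.2 (hw0 t ht)) (sq_nonneg _)
  set m := -w a - c * ∫ t in 0..a, -w t with hm_def
  suffices hm : m * ‖η a‖ ^ 2 ≤ a * ∫ t in 0..a, -w t * ‖η' t‖ ^ 2 by
    have : -w a * ‖η a‖ ^ 2 = m * ‖η a‖ ^ 2 + c * (∫ t in 0..a, -w t) * ‖η a‖ ^ 2 := by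
      rw [hm_def]; ring
    linarith
  rcases le_or_gt m 0 with hm | hm
  · nlinarith [sq_nonneg ‖η a‖]
  have hwm : ∀ s ∈ Ioc 0 a, m ≤ -w s := fun s hs => by
    linarith [neg_le_neg_add_mul_integral hs hc hw0 hwi (hw' s hs) (hw'i s hs) hcw]
  have hL2 : MemLp η' 2 (volume.restrict (Ioc 0 a)) := by
    refine (memLp_two_iff_integrable_sq_norm hη'm).2
      (Integrable.mono' (hE.const_mul m⁻¹) (hη'm.norm.pow 2) ?_)
    filter_upwards [ae_restrict_mem measurableSet_Ioc] with t ht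
    rw [Real.norm_of_nonneg (sq_nonneg _), ← div_eq_inv_mul, le_div_iff₀ hm, mul_comm]
    exact mul_le_mul_of_nonneg_right (hwm t ht) (sq_nonneg _)
  have hJ : m * ∫ t in 0..a, ‖η' t‖ ^ 2 ≤ ∫ t in 0..a, -w t * ‖η' t‖ ^ 2 := by
    rw [← intervalIntegral.integral_const_mul, intervalIntegral.integral_of_le ha.le,
      intervalIntegral.integral_of_le ha.le]
    exact setIntegral_mono_on (hL2.integrable_norm_pow two_ne_zero |>.const_mul m) hE
      measurableSet_Ioc fun t ht => mul_le_mul_of_nonneg_right (hwm t ht) (sq_nonneg _)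
  calc m * ‖η a‖ ^ 2 ≤ m * (a * ∫ t in 0..a, ‖η' t‖ ^ 2) :=
        mul_le_mul_of_nonneg_left (norm_sq_le_mul_integral_norm_sq ha hη hη0 hL2) hm.le
    _ = a * (m * ∫ t in 0..a, ‖η' t‖ ^ 2) := by ring
    _ ≤ a * ∫ t in 0..a, -w t * ‖η' t‖ ^ 2 := mul_le_mul_of_nonneg_left hJ ha.le

theorem tendsto_neg_mul_norm_sq_nhdsGT_zero (hc : 0 ≤ c)
    (hw0 : ∀ s ∈ Ioi 0, w s ≤ 0) (hw : IntegrableOn w (Ioi 0))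
    (hw' : ∀ s a, 0 < s → s ≤ a → w a - w s = ∫ t in s..a, w' t)
    (hw'i : ∀ s a, 0 < s → s ≤ a → IntervalIntegrable w' volume s a)
    (hcw : ∀ᵐ t, t ∈ Ioi 0 → c * w t - w' t ≤ 0)
    (hη : ∀ s a, 0 < s → s ≤ a → η a - η s = ∫ t in s..a, η' t)
    (hη0 : Tendsto η (𝓝[>] 0) (𝓝 0))
    (hη'm : AEStronglyMeasurable η' (volume.restrict (Ioi 0)))
    (hE : IntegrableOn (fun t => -w t * ‖η' t‖ ^ 2) (Ioi 0)) :
    Tendsto (fun a => -w a * ‖η a‖ ^ 2) (𝓝[>] 0) (𝓝 0) := by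
  have hG := tendsto_intervalIntegral_nhdsGT zero_lt_one (hw.neg.mono_set Ioc_subset_Ioi_self)
  have hEt := tendsto_intervalIntegral_nhdsGT zero_lt_one (hE.mono_set Ioc_subset_Ioi_self)
  have hX : Tendsto (fun a => ‖η a‖ ^ 2) (𝓝[>] 0) (𝓝 0) := by simpa using hη0.norm.pow 2
  have hid : Tendsto (fun a : ℝ => a) (𝓝[>] 0) (𝓝 0) := tendsto_id.mono_left nhdsWithin_le_nhds
  refine squeeze_zero' (g := fun a =>
      c * (∫ t in 0..a, -w t) * ‖η a‖ ^ 2 + a * ∫ t in 0..a, -w t * ‖η' t‖ ^ 2) ?_ ?_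
    (by simpa using ((hG.const_mul c).mul hX).add (hid.mul hEt))
  · filter_upwards [self_mem_nhdsWithin] with a ha
    exact mul_nonneg (neg_nonneg.2 (hw0 a ha)) (sq_nonneg _)
  · filter_upwards [self_mem_nhdsWithin] with a (ha : 0 < a)
    exact neg_mul_norm_sq_le_mul_integral_add ha hc (fun s hs => hw0 s hs.1)
      (hw.mono_set Ioc_subset_Ioi_self) (fun s hs => hw' s a hs.1 hs.2)
      (fun s hs => hw'i s a hs.1 hs.2) (hcw.mono fun t ht ht' => ht ht'.1)
      (fun s hs => hη s a hs.1 hs.2) hη0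
      (hη'm.mono_measure (Measure.restrict_mono Ioc_subset_Ioi_self le_rfl))
      (hE.mono_set Ioc_subset_Ioi_self)

end Normed

section InnerProduct

variable {E : Type*} [NormedAddCommGroup E] [InnerProductSpace ℝ E]

theorem integrable_mul_inner_of_integrable_mul_norm_sq {α : Type*} [MeasurableSpace α]
    {μ : Measure α} {w : α → ℝ} {u v : α → E} (hw0 : 0 ≤ᵐ[μ] w)
    (hwm : AEStronglyMeasurable w μ) (hum : AEStronglyMeasurable u μ)
    (hvm : AEStronglyMeasurable v μ) (hu : Integrable (fun x => w x * ‖u x‖ ^ 2) μ)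
    (hv : Integrable (fun x => w x * ‖v x‖ ^ 2) μ) :
    Integrable (fun x => w x * inner ℝ (u x) (v x)) μ := by
  refine Integrable.mono' ((hu.add hv).const_mul (1 / 2)) (hwm.mul (hum.inner hvm)) ?_
  filter_upwards [hw0] with x hx
  have hamgm : ‖u x‖ * ‖v x‖ ≤ (‖u x‖ ^ 2 + ‖v x‖ ^ 2) / 2 := by
    nlinarith [sq_nonneg (‖u x‖ - ‖v x‖)]
  rw [Real.norm_eq_abs, abs_mul, abs_of_nonneg hx]
  calc w x * |inner ℝ (u x) (v x)| ≤ w x * (‖u x‖ * ‖v x‖) :=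
        mul_le_mul_of_nonneg_left (abs_real_inner_le_norm _ _) hx
    _ ≤ w x * ((‖u x‖ ^ 2 + ‖v x‖ ^ 2) / 2) := mul_le_mul_of_nonneg_left hamgm hx
    _ = 1 / 2 * (w x * ‖u x‖ ^ 2 + w x * ‖v x‖ ^ 2) := by ring

theorem intervalIntegral_neg_mul_inner_le {w w' : ℝ → ℝ} {η η' : ℝ → E} {a b c : ℝ}
    (hab : a ≤ b) (hw : AbsolutelyContinuousOnInterval w a b)
    (hη : AbsolutelyContinuousOnInterval η a b)
    (hw' : ∀ᵐ x, x ∈ Icc a b → HasDerivAt w (w' x) x)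
    (hη' : ∀ᵐ x, x ∈ Icc a b → HasDerivAt η (η' x) x)
    (hcw : ∀ᵐ x, x ∈ Icc a b → c * w x - w' x ≤ 0) (hwb : w b ≤ 0) :
    ∫ x in a..b, -w x * inner ℝ (-η' x - (c / 2) • η x) (η x) ≤ 1 / 2 * (-w a * ‖η a‖ ^ 2) := by
  set φ := fun x => ‖η x‖ ^ 2 with hφ_def
  have hφ : AbsolutelyContinuousOnInterval φ a b := hη.norm_sq
  have hφ' : ∀ᵐ x, x ∈ uIoc a b → deriv φ x = 2 * inner ℝ (η x) (η' x) :=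
    hη'.mono fun x hx hxab => (hx (Ioc_subset_Icc_self (uIoc_of_le hab ▸ hxab))).norm_sq.deriv
  have hw'' : ∀ᵐ x, x ∈ Icc a b → deriv w x = w' x := hw'.mono fun x hx hxab => (hx hxab).deriv
  have hwφ' : IntervalIntegrable (fun x => w x * deriv φ x) volume a b :=
    hφ.intervalIntegrable_deriv.continuousOn_mul hw.continuousOn
  have hwφ : IntervalIntegrable (fun x => w x * φ x) volume a b :=
    (hw.continuousOn.mul hφ.continuousOn).intervalIntegrable
  have hw'φ : IntervalIntegrable (fun x => deriv w x * φ x) volume a b :=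
    hw.intervalIntegrable_deriv.mul_continuousOn hφ.continuousOn
  have hsplit : ∫ x in a..b, -w x * inner ℝ (-η' x - (c / 2) • η x) (η x) =
      1 / 2 * (∫ x in a..b, w x * deriv φ x) + c / 2 * ∫ x in a..b, w x * φ x := by
    rw [← intervalIntegral.integral_const_mul, ← intervalIntegral.integral_const_mul,
      ← intervalIntegral.integral_add (hwφ'.const_mul _) (hwφ.const_mul _)]
    refine intervalIntegral.integral_congr_ae (hφ'.mono fun x hx hxab => ?_)
    rw [hx hxab, hφ_def, real_inner_comm (η' x) (η x)]
    simp only [inner_sub_left, inner_neg_left, real_inner_smul_left, real_inner_self_eq_norm_sq]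
    ring
  have hdiss : 0 ≤ ∫ x in a..b, (deriv w x - c * w x) * φ x := by
    refine intervalIntegral.integral_nonneg_of_ae_restrict hab ?_
    filter_upwards [ae_restrict_mem measurableSet_Icc, ae_restrict_of_ae hcw,
      ae_restrict_of_ae hw''] with x hx hcx hdx
    rw [Pi.zero_apply, hdx hx]
    exact mul_nonneg (by linarith [hcx hx]) (sq_nonneg _)
  rw [intervalIntegral.integral_congr (g := fun x => deriv w x * φ x - c * (w x * φ x))
      (fun x _ => by ring), intervalIntegral.integral_sub hw'φ (hwφ.const_mul c),
    intervalIntegral.integral_const_mul] at hdiss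
  have hparts := hw.integral_mul_deriv_eq_deriv_mul hφ
  have hb : w b * φ b ≤ 0 := mul_nonpos_of_nonpos_of_nonneg hwb (sq_nonneg _)
  rw [hsplit, hparts]
  linarith

end InnerProduct

theorem mgt_dissipativity_general
    {E : Type*} [NormedAddCommGroup E] [InnerProductSpace ℝ E] [CompleteSpace E]
    (α δ : ℝ) (hδα : δ < α)
    (g' g'' : ℝ → ℝ)
    (hg'deriv : ∀ᵐ s : ℝ, s ∈ Set.Ioi (0 : ℝ) → HasDerivAt g' (g'' s) s)
    (hg''loc : ∀ a b : ℝ, 0 < a → a ≤ b → IntervalIntegrable g'' MeasureTheory.volume a b)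
    (hFTCg' : ∀ a b : ℝ, 0 < a → a ≤ b → g' b - g' a = ∫ y in a..b, g'' y)
    (hg'_int : IntegrableOn g' (Set.Ioi 0))
    (hg'_nonpos : ∀ s ∈ Set.Ioi (0 : ℝ), g' s ≤ 0)
    (hg3 : ∀ᵐ s : ℝ, s ∈ Set.Ioi (0 : ℝ) → (α - δ) * g' s - g'' s ≤ 0)
    (η η' : ℝ → E)
    (hηderiv : ∀ᵐ s : ℝ, s ∈ Set.Ioi (0 : ℝ) → HasDerivAt η (η' s) s)
    (hη'loc : ∀ a b : ℝ, 0 < a → a ≤ b → IntervalIntegrable η' MeasureTheory.volume a b)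
    (hηFTC : ∀ a b : ℝ, 0 < a → a ≤ b → η b - η a = ∫ y in a..b, η' y)
    (hη0 : Tendsto η (nhdsWithin 0 (Set.Ioi 0)) (nhds 0))
    (hη_int : IntegrableOn (fun s => -g' s * ‖η s‖ ^ 2) (Set.Ioi 0))
    (hη'_int : IntegrableOn (fun s => -g' s * ‖η' s‖ ^ 2) (Set.Ioi 0)) :
    (∫ s in Set.Ioi (0 : ℝ),
        -g' s * (inner ℝ (-η' s - ((α - δ) / 2) • η s) (η s) : ℝ)) ≤ 0 ∧
    (∫ s in Set.Ioi (0 : ℝ), -g' s * (inner ℝ (-η' s) (η s) : ℝ))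
      ≤ ((α - δ) / 2) * ∫ s in Set.Ioi (0 : ℝ), -g' s * ‖η s‖ ^ 2 := by
  have hg'ac : ∀ a b, 0 < a → a ≤ b → AbsolutelyContinuousOnInterval g' a b := fun a b ha hab =>
    .of_sub_eq_intervalIntegral (hg''loc a b ha hab) fun x hx =>
      hFTCg' a x ha (uIcc_of_le hab ▸ hx).1
  have hηac : ∀ a b, 0 < a → a ≤ b → AbsolutelyContinuousOnInterval η a b := fun a b ha hab =>
    .of_sub_eq_intervalIntegral (hη'loc a b ha hab) fun x hx =>
      hηFTC a x ha (uIcc_of_le hab ▸ hx).1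
  have hη'm : AEStronglyMeasurable η' (volume.restrict (Ioi 0)) :=
    (aestronglyMeasurable_deriv η _).congr ((ae_restrict_iff' measurableSet_Ioi).2
      (hηderiv.mono fun s hs hs0 => (hs hs0).deriv))
  have hT : IntegrableOn (fun s => -g' s * inner ℝ (-η' s) (η s)) (Ioi 0) :=
    integrable_mul_inner_of_integrable_mul_norm_sq
      ((ae_restrict_iff' measurableSet_Ioi).2 (ae_of_all _ fun s hs =>
        neg_nonneg.2 (hg'_nonpos s hs)))
      ((continuousOn_Ioi_of_absolutelyContinuousOnInterval hg'ac).aestronglyMeasurable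
        measurableSet_Ioi).neg hη'm.neg
      ((continuousOn_Ioi_of_absolutelyContinuousOnInterval hηac).aestronglyMeasurable
        measurableSet_Ioi)
      (hη'_int.congr (ae_of_all _ fun s => by simp only [norm_neg])) hη_int
  have hsplit (s : ℝ) : -g' s * inner ℝ (-η' s - ((α - δ) / 2) • η s) (η s) =
      -g' s * inner ℝ (-η' s) (η s) - (α - δ) / 2 * (-g' s * ‖η s‖ ^ 2) := by
    simp only [inner_sub_left, real_inner_smul_left, real_inner_self_eq_norm_sq]
    ring
  have hmain := integral_Ioi_le_of_intervalIntegral_le (L := 0)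
    ((hT.sub (hη_int.const_mul _)).congr (ae_of_all _ fun s => (hsplit s).symm))
    (fun a b ha hab => intervalIntegral_neg_mul_inner_le hab (hg'ac a b ha hab) (hηac a b ha hab)
      (hg'deriv.mono fun x hx hxab => hx (ha.trans_le hxab.1))
      (hηderiv.mono fun x hx hxab => hx (ha.trans_le hxab.1))
      (hg3.mono fun x hx hxab => hx (ha.trans_le hxab.1)) (hg'_nonpos b (ha.trans_le hab)))
    (by simpa only [mul_zero] using (tendsto_neg_mul_norm_sq_nhdsGT_zero (by linarith)
      hg'_nonpos hg'_int hFTCg' hg''loc hg3 hηFTC hη0 hη'm hη'_int).const_mul (1 / 2))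
  refine ⟨hmain, ?_⟩
  simp_rw [hsplit] at hmain
  rw [integral_sub hT (hη_int.const_mul _), integral_const_mul] at hmain
  linarith

/-- dissipativity of `S = T - ωI`, `Tη = -η'`, `ω = (α-δ)/2`, on the
weighted space `M = L²_{-g'}((0,∞); E)`:
`⟨Sη, η⟩_M ≤ 0`, i.e. `⟨Tη, η⟩_M ≤ ω ‖η‖_M²`. -/
theorem mgt_dissipativity
    {E : Type*} [NormedAddCommGroup E] [InnerProductSpace ℝ E] [CompleteSpace E]
    (α δ : ℝ) (hδ : 0 < δ) (hδα : δ < α)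
    (g g' g'' : ℝ → ℝ)
    (hgderiv : ∀ s ∈ Set.Ioi (0 : ℝ), HasDerivAt g (g' s) s)
    (hg'deriv : ∀ᵐ s : ℝ, s ∈ Set.Ioi (0 : ℝ) → HasDerivAt g' (g'' s) s)
    (hg''loc : ∀ a b : ℝ, 0 < a → a ≤ b → IntervalIntegrable g'' MeasureTheory.volume a b)
    (hFTCg' : ∀ a b : ℝ, 0 < a → a ≤ b → g' b - g' a = ∫ y in a..b, g'' y)
    (hg_int : IntegrableOn g (Set.Ioi 0))
    (hg'_int : IntegrableOn g' (Set.Ioi 0))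
    (hg_nonneg : ∀ s ∈ Set.Ioi (0 : ℝ), 0 ≤ g s)
    (hg'_nonpos : ∀ s ∈ Set.Ioi (0 : ℝ), g' s ≤ 0)
    (hg3 : ∀ᵐ s : ℝ, s ∈ Set.Ioi (0 : ℝ) → (α - δ) * g' s - g'' s ≤ 0)
    (η η' : ℝ → E)
    (hηderiv : ∀ᵐ s : ℝ, s ∈ Set.Ioi (0 : ℝ) → HasDerivAt η (η' s) s)
    (hη'loc : ∀ a b : ℝ, 0 < a → a ≤ b → IntervalIntegrable η' MeasureTheory.volume a b)
    (hηFTC : ∀ a b : ℝ, 0 < a → a ≤ b → η b - η a = ∫ y in a..b, η' y)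
    (hη0 : Tendsto η (nhdsWithin 0 (Set.Ioi 0)) (nhds 0))
    (hη_int : IntegrableOn (fun s => -g' s * ‖η s‖ ^ 2) (Set.Ioi 0))
    (hη'_int : IntegrableOn (fun s => -g' s * ‖η' s‖ ^ 2) (Set.Ioi 0)) :
    (∫ s in Set.Ioi (0 : ℝ),
        -g' s * (inner ℝ (-η' s - ((α - δ) / 2) • η s) (η s) : ℝ)) ≤ 0 ∧
    (∫ s in Set.Ioi (0 : ℝ), -g' s * (inner ℝ (-η' s) (η s) : ℝ))
      ≤ ((α - δ) / 2) * ∫ s in Set.Ioi (0 : ℝ), -g' s * ‖η s‖ ^ 2 :=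
  mgt_dissipativity_general α δ hδα g' g'' hg'deriv hg''loc hFTCg' hg'_int hg'_nonpos hg3 η η'
    hηderiv hη'loc hηFTC hη0 hη_int hη'_int
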